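/- Let M be geometric with P(M = k) = p q^{k-1} (k ≥ 1) and Z_1, Z_2, ... i.i.d. Sibuya(α) independent of M. Then J^B = 1 + ∑_{k=1}^{M-1} Z_k has probability generating function E[u^{J^B}] = u/(1 + (q/p)(1-u)^α) for u ∈ [0,1). -/

import Mathlib

/-! Conditionally on `M = m`, the variable `J^B` is `1` plus a sum of `m - 1` independent
Sibuya variables, so its pgf is `u φ(u)^(m-1)`, where `φ(u) = 1 - (1-u)^α` is the Sibuya pgf,
read off from the binomial series of `(1-u)^α`. Averaging over the geometric law of `M` gives a
geometric series of ratio `(1-p) φ(u)`, whose sum `p u / (1 - (1-p) φ(u))` is the claim. -/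

open MeasureTheory ProbabilityTheory

/-- Generalized binomial coefficient `binom(x, k) = x(x-1)⋯(x-k+1)/k!` for real `x`. -/
noncomputable def gbinom (x : ℝ) (k : ℕ) : ℝ :=
  (∏ i ∈ Finset.range k, (x - i)) / (Nat.factorial k)

/-- Sibuya(α) probability mass function. -/
noncomputable def sibuya (α : ℝ) (k : ℕ) : ℝ :=
  if k = 0 then 0 else (-1 : ℝ) ^ (k - 1) * gbinom α k

lemma gbinom_eq_choose (x : ℝ) (k : ℕ) : gbinom x k = Ring.choose x k := by
  rw [Ring.choose_eq_smul, gbinom, ← descPochhammer_eval_eq_prod_range,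
    ← Polynomial.aeval_eq_smeval, Polynomial.aeval_def, ← Polynomial.eval_map, descPochhammer_map,
    smul_eq_mul, div_eq_inv_mul]

theorem hasSum_sibuya_mul_pow (α : ℝ) {u : ℝ} (hu : |u| < 1) :
    HasSum (fun k => sibuya α k * u ^ k) (1 - (1 - u) ^ α) := by
  have hbinom : HasSum (fun k => Ring.choose α k * (-u) ^ k) ((1 - u) ^ α) := by
    have := Real.one_add_rpow_hasFPowerSeriesOnBall_zero (a := α) |>.hasSum (y := -u)
      (by simpa [edist_dist] using hu)
    simpa [-FormalMultilinearSeries.apply_eq_prod_smul_coeff, binomialSeries_apply,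
      sub_eq_add_neg] using this
  refine ((hasSum_ite_eq 0 (1 : ℝ)).sub hbinom).congr_fun fun k => ?_
  rcases k with _ | k
  · simp [sibuya]
  · simp [sibuya, gbinom_eq_choose, pow_succ, neg_pow u]
    ring

namespace ProbabilityTheory

variable {Ω : Type*} [MeasurableSpace Ω] {μ : Measure Ω}

lemma hasSum_setIntegral_fiber {ι : Type*} [Countable ι] [MeasurableSpace ι]
    [MeasurableSingletonClass ι] {N : Ω → ι} (hN : Measurable N) {F : Ω → ℝ}
    (hF : Integrable F μ) :
    HasSum (fun i => ∫ ω in {ω | N ω = i}, F ω ∂μ) (∫ ω, F ω ∂μ) := by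
  have hfib : ∀ i, MeasurableSet {ω | N ω = i} := fun i => hN (measurableSet_singleton i)
  have hdisj : Pairwise (Function.onFun Disjoint fun i => {ω | N ω = i}) :=
    fun i j hij => Set.disjoint_left.2 fun ω hi hj => hij (hi.symm.trans hj)
  have hcover : ⋃ i, {ω | N ω = i} = Set.univ := Set.iUnion_eq_univ_iff.2 fun ω => ⟨N ω, rfl⟩
  simpa [hcover] using hasSum_integral_iUnion hfib hdisj hF.integrableOn

lemma hasSum_measureReal_mul_integral_comp [IsFiniteMeasure μ] {ι : Type*} [Countable ι]
    [MeasurableSpace ι] [MeasurableSingletonClass ι] {N : Ω → ι} (hN : Measurable N)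
    {f : ι → ℝ} {C : ℝ} (hf : ∀ i, ‖f i‖ ≤ C) :
    HasSum (fun i => μ.real {ω | N ω = i} * f i) (∫ ω, f (N ω) ∂μ) := by
  have hint : Integrable (fun ω => f (N ω)) μ :=
    .of_bound (measurable_of_countable f |>.comp hN).aestronglyMeasurable C
      (ae_of_all _ fun ω => hf _)
  refine (hasSum_setIntegral_fiber hN hint).congr_fun fun i => ?_
  have hfib : MeasurableSet {ω | N ω = i} := hN (measurableSet_singleton i)
  rw [setIntegral_congr_fun hfib (fun ω (hω : N ω = i) => by rw [hω]), setIntegral_const,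
    smul_eq_mul]

lemma IndepFun.hasSum_measureReal_mul_integral [IsProbabilityMeasure μ] {ι β : Type*}
    [Countable ι] [MeasurableSpace ι] [MeasurableSingletonClass ι] [MeasurableSpace β]
    {N : Ω → ι} {Y : Ω → β} (hNY : IndepFun N Y μ) (hN : Measurable N) (hY : Measurable Y)
    {g : ι → β → ℝ} (hg : ∀ i, Measurable (g i)) {C : ℝ} (hgC : ∀ i y, ‖g i y‖ ≤ C) :
    HasSum (fun i => μ.real {ω | N ω = i} * ∫ ω, g i (Y ω) ∂μ) (∫ ω, g (N ω) (Y ω) ∂μ) := by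
  have hint : Integrable (fun ω => g (N ω) (Y ω)) μ := by
    refine .of_bound ?_ C (ae_of_all _ fun ω => hgC _ _)
    exact ((measurable_from_prod_countable_right (f := Function.uncurry g) hg).comp
      (hN.prodMk hY)).aestronglyMeasurable
  refine (hasSum_setIntegral_fiber hN hint).congr_fun fun i => ?_
  have hfib : MeasurableSet {ω | N ω = i} := hN (measurableSet_singleton i)
  rw [setIntegral_congr_fun hfib (fun ω (hω : N ω = i) => by rw [hω])]
  exact (((IndepFun_iff_Indep N Y μ).1 hNY).setIntegral_eq_mul (measurable_iff_comap_le.1 hN)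
    hY.aemeasurable ⟨{i}, measurableSet_singleton i, rfl⟩ (hg i).aestronglyMeasurable).symm

lemma iIndepFun.integral_pow_sum {ι : Type*} {Z : ι → Ω → ℕ} (hZ : iIndepFun Z μ)
    (hZm : ∀ i, Measurable (Z i)) (u : ℝ) (s : Finset ι) :
    ∫ ω, u ^ (∑ i ∈ s, Z i ω) ∂μ = ∏ i ∈ s, ∫ ω, u ^ Z i ω ∂μ := by
  simp_rw [← Finset.prod_pow_eq_pow_sum, ← Finset.prod_coe_sort s]
  exact (hZ.precomp Subtype.val_injective).integral_fun_prod_comp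
    (fun i => (hZm i).aemeasurable) fun i => (measurable_of_countable _).aestronglyMeasurable

end ProbabilityTheory

theorem compound_geometric_sibuya_pgf_B_general
    {Ω : Type*} [MeasurableSpace Ω] (μ : Measure Ω) [IsProbabilityMeasure μ]
    (α : ℝ)
    (p : ℝ) (hp : p ∈ Set.Ioc (0 : ℝ) 1)
    (Z : ℕ → Ω → ℕ) (hZmeas : ∀ i, Measurable (Z i))
    (hZindep : iIndepFun Z μ)
    (hZlaw : ∀ i k, (μ {ω | Z i ω = k}).toReal = sibuya α k)
    (M : Ω → ℕ) (hMmeas : Measurable M)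
    (hMlaw : ∀ k : ℕ, 1 ≤ k → (μ {ω | M ω = k}).toReal = p * (1 - p) ^ (k - 1))
    (hM0 : (μ {ω | M ω = 0}).toReal = 0)
    (hMZ : IndepFun M (fun ω => fun i => Z i ω) μ)
    (u : ℝ) (hu : u ∈ Set.Ico (0 : ℝ) 1) :
    ∫ ω, u ^ (1 + ∑ k ∈ Finset.range (M ω - 1), Z k ω) ∂μ
      = u / (1 + ((1 - p) / p) * (1 - u) ^ α) := by
  obtain ⟨hp0, hp1⟩ := hp
  obtain ⟨hu0, hu1⟩ := hu
  have hu_norm : ∀ n : ℕ, ‖u ^ n‖ ≤ 1 := fun n => by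
    rw [norm_pow, Real.norm_of_nonneg hu0]
    exact pow_le_one₀ hu0 hu1.le
  set s := 1 - (1 - u) ^ α
  have hZpgf : ∀ i, ∫ ω, u ^ Z i ω ∂μ = s := fun i =>
    (hasSum_measureReal_mul_integral_comp (hZmeas i) hu_norm).unique <| by
      simpa [Measure.real, hZlaw] using hasSum_sibuya_mul_pow α (abs_lt.2 ⟨by linarith, hu1⟩)
  have hs : |s| ≤ 1 := by
    simpa [← hZpgf 0] using norm_integral_le_of_norm_le_const (μ := μ)
      (f := fun ω => u ^ Z 0 ω) (ae_of_all _ fun ω => hu_norm _)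
  have hpartial : ∀ m, ∫ ω, u ^ (1 + ∑ k ∈ Finset.range (m - 1), Z k ω) ∂μ = u * s ^ (m - 1) := by
    intro m
    simp_rw [pow_add, pow_one]
    rw [integral_const_mul, hZindep.integral_pow_sum hZmeas,
      Finset.prod_congr rfl fun i _ => hZpgf i, Finset.prod_const, Finset.card_range]
  have hcompound := hMZ.hasSum_measureReal_mul_integral hMmeas (measurable_pi_lambda _ hZmeas)
    (g := fun m z => u ^ (1 + ∑ k ∈ Finset.range (m - 1), z k)) (fun m => by fun_prop)
    (fun m z => hu_norm _)
  simp only [hpartial] at hcompound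
  have hqs : |(1 - p) * s| < 1 := by
    rw [abs_mul, abs_of_nonneg (by linarith)]
    nlinarith [abs_nonneg s]
  have hgeom : HasSum (fun m => μ.real {ω | M ω = m} * (u * s ^ (m - 1)))
      (p * u * (1 - (1 - p) * s)⁻¹) := by
    rw [← hasSum_nat_add_iff' 1]
    simpa [Measure.real, hM0, hMlaw, mul_pow, mul_assoc, mul_comm, mul_left_comm] using
      (hasSum_geometric_of_abs_lt_one hqs).mul_left (p * u)
  have hdenom : 1 + (1 - p) / p * (1 - u) ^ α = (1 - (1 - p) * s) / p := by
    field_simp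
    ring
  rw [hcompound.unique hgeom, hdenom]
  field_simp

/-- Let `M` be geometric with `P(M = k) = p q^(k-1)` for `k ≥ 1` (`q = 1-p`),
and `Z₁, Z₂, …` i.i.d. Sibuya(α) independent of `M`. Then the compound shifted sum
`J^B = 1 + ∑_{k=1}^{M-1} Z_k` has probability generating function
`E[u^(J^B)] = u/(1 + (q/p)(1-u)^α)` for `u ∈ [0,1)`. -/
theorem compound_geometric_sibuya_pgf_B
    {Ω : Type*} [MeasurableSpace Ω] (μ : Measure Ω) [IsProbabilityMeasure μ]
    (α : ℝ) (hα : α ∈ Set.Ioo (0 : ℝ) 1)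
    (p : ℝ) (hp : p ∈ Set.Ioc (0 : ℝ) 1)
    (Z : ℕ → Ω → ℕ) (hZmeas : ∀ i, Measurable (Z i))
    (hZindep : iIndepFun Z μ)
    (hZlaw : ∀ i k, (μ {ω | Z i ω = k}).toReal = sibuya α k)
    (M : Ω → ℕ) (hMmeas : Measurable M)
    (hMlaw : ∀ k : ℕ, 1 ≤ k → (μ {ω | M ω = k}).toReal = p * (1 - p) ^ (k - 1))
    (hM0 : (μ {ω | M ω = 0}).toReal = 0)
    (hMZ : IndepFun M (fun ω => fun i => Z i ω) μ)
    (u : ℝ) (hu : u ∈ Set.Ico (0 : ℝ) 1) :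
    ∫ ω, u ^ (1 + ∑ k ∈ Finset.range (M ω - 1), Z k ω) ∂μ
      = u / (1 + ((1 - p) / p) * (1 - u) ^ α) :=
  compound_geometric_sibuya_pgf_B_general μ α p hp Z hZmeas hZindep hZlaw M hMmeas hMlaw hM0 hMZ u
    hu
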